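/- Let α, γ > 0 and let z_k = (2k+1+iα)/γ for k ∈ ℤ. Then for every z in the upper half-plane ℂ₊, the family (|(z−z_k)/(z−conj z_k)|)_{k∈ℤ} is multipliable and its product equals the modulus of B_{α,γ}: ∏_{k∈ℤ} |(z−z_k)/(z−conj z_k)| = |(e^{iπγz} + e^{−πα})/(1 + e^{iπγz−πα})|. -/

import Mathlib

open Complex

/-- The zero `z_k = (2k+1+iα)/γ` of the Blaschke product `B_{α,γ}`. -/
noncomputable def zk (α γ : ℝ) (k : ℤ) : ℂ :=
  ((2 * (k : ℂ) + 1) + (α : ℂ) * Complex.I) / (γ : ℂ)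

/-- The function `B_{α,γ}(z) = (e^{iπγz} + e^{−πα})/(1 + e^{iπγz−πα})`. -/
noncomputable def Bag (α γ : ℝ) (z : ℂ) : ℂ :=
  (Complex.exp (Complex.I * Real.pi * γ * z) + Complex.exp (-(Real.pi * α : ℝ))) /
    (1 + Complex.exp (Complex.I * Real.pi * γ * z - (Real.pi * α : ℝ)))

/-!
Put `a = γz − iα` and `b = γz + iα`; then the `k`-th factor is `|(a − m)/(b − m)|` with
`m = 2k + 1`, and `B_{α,γ}(z) = cos(πa/2) / cos(πb/2)`. Pairing `k` with `−1 − k` turns the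
partial products over `[−n, n)` into quotients of partial products of
`cos(πx/2) = ∏ₖ (1 − x²/(2k+1)²)`, a consequence of Euler's sine product at `(x + 1)/2` and
Wallis' product. Unconditional convergence holds because `|b − m|² − |a − m|²` does not
depend on `m`, so every factor is `1 + O(1/k²)`.
-/

open Filter Finset Topology
open scoped Real

noncomputable def wallisRatio (n : ℕ) : ℝ := ∏ j ∈ range n, ((2 * (j : ℝ) + 1) / (2 * j + 2)) ^ 2

lemma prod_wallis_mul_wallisRatio (n : ℕ) :
    (∏ i ∈ range n, ((2 : ℝ) * i + 2) / (2 * i + 1) * ((2 * i + 2) / (2 * i + 3))) *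
      ((2 * n + 1) * wallisRatio n) = 1 := by
  induction n with
  | zero => simp [wallisRatio]
  | succ n ih =>
    rw [wallisRatio, prod_range_succ, prod_range_succ, ← wallisRatio]
    push_cast
    generalize ∏ i ∈ range n, ((2 : ℝ) * i + 2) / (2 * i + 1) * ((2 * i + 2) / (2 * i + 3)) = P
      at ih ⊢
    have hstep : (2 * (n : ℝ) + 2) / (2 * n + 1) * ((2 * n + 2) / (2 * n + 3)) *
        ((2 * (n + 1) + 1) * (wallisRatio n * ((2 * n + 1) / (2 * n + 2)) ^ 2)) =
        (2 * n + 1) * wallisRatio n := by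
      field_simp
      ring
    rw [mul_assoc, hstep, ih]

lemma tendsto_two_mul_add_one_mul_wallisRatio :
    Tendsto (fun n : ℕ => (2 * (n : ℝ) + 1) * wallisRatio n) atTop (𝓝 (2 / π)) := by
  rw [← inv_div]
  refine (Real.tendsto_prod_pi_div_two.inv₀ (by positivity)).congr fun n => ?_
  exact inv_eq_of_mul_eq_one_right (prod_wallis_mul_wallisRatio n)

lemma tendsto_wallisRatio_zero : Tendsto wallisRatio atTop (𝓝 0) := by
  have hinv : Tendsto (fun n : ℕ => (2 * (n : ℝ) + 1)⁻¹) atTop (𝓝 0) :=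
    tendsto_inv_atTop_zero.comp <| tendsto_atTop_add_const_right _ _ <|
      tendsto_natCast_atTop_atTop.const_mul_atTop two_pos
  simpa using (tendsto_two_mul_add_one_mul_wallisRatio.mul hinv).congr fun n => by
    field_simp

lemma euler_sin_partial_prod_eq (x : ℂ) (n : ℕ) :
    (π : ℂ) * ((x + 1) / 2) * ∏ j ∈ range n, (1 - ((x + 1) / 2) ^ 2 / ((j : ℂ) + 1) ^ 2) =
      (∏ k ∈ range n, (1 - x ^ 2 / (2 * (k : ℂ) + 1) ^ 2)) *
        ((π / 2 : ℂ) * (2 * n + 1 + x) * (wallisRatio n : ℂ)) := by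
  induction n with
  | zero => simp [wallisRatio]; ring
  | succ n ih =>
    rw [prod_range_succ, prod_range_succ, wallisRatio, prod_range_succ, ← wallisRatio]
    have h1 : (n : ℂ) + 1 ≠ 0 := by norm_cast
    have h2 : 2 * (n : ℂ) + 1 ≠ 0 := by norm_cast
    have hfactor : (2 * n + 1 + x) * (1 - ((x + 1) / 2) ^ 2 / ((n : ℂ) + 1) ^ 2) =
        (1 - x ^ 2 / (2 * (n : ℂ) + 1) ^ 2) * (2 * (n + 1) + 1 + x) *
          ((2 * (n : ℂ) + 1) / (2 * n + 2)) ^ 2 := by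
      field_simp
      ring
    push_cast
    linear_combination (1 - ((x + 1) / 2) ^ 2 / ((n : ℂ) + 1) ^ 2) * ih +
      (∏ k ∈ range n, (1 - x ^ 2 / (2 * (k : ℂ) + 1) ^ 2)) * (π / 2 : ℂ) *
        (wallisRatio n : ℂ) * hfactor

theorem Complex.tendsto_prod_one_sub_sq_div_odd_sq (x : ℂ) :
    Tendsto (fun n : ℕ => ∏ k ∈ range n, (1 - x ^ 2 / (2 * (k : ℂ) + 1) ^ 2)) atTop
      (𝓝 (cos (π * x / 2))) := by
  set D : ℕ → ℂ := fun n => (π / 2 : ℂ) * (2 * n + 1 + x) * (wallisRatio n : ℂ)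
  have hD : Tendsto D atTop (𝓝 1) := by
    have hmain := (continuous_ofReal.tendsto _).comp
      tendsto_two_mul_add_one_mul_wallisRatio
    have hrest := (continuous_ofReal.tendsto _).comp tendsto_wallisRatio_zero
    have := (hmain.const_mul (π / 2 : ℂ)).add (hrest.const_mul ((π / 2 : ℂ) * x))
    convert this using 2 with n
    · simp only [D, Function.comp_apply]; push_cast; ring
    · push_cast; field_simp; simp
  have hsin : Tendsto (fun n => (∏ k ∈ range n, (1 - x ^ 2 / (2 * (k : ℂ) + 1) ^ 2)) * D n)
      atTop (𝓝 (cos (π * x / 2))) := by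
    have h := tendsto_euler_sin_prod ((x + 1) / 2)
    rw [show (π : ℂ) * ((x + 1) / 2) = π * x / 2 + π / 2 by ring,
      sin_add_pi_div_two] at h
    exact h.congr fun n => by rw [← euler_sin_partial_prod_eq]; ring
  have hquot := hsin.div hD one_ne_zero
  rw [div_one] at hquot
  refine hquot.congr' ?_
  filter_upwards [hD.eventually_ne one_ne_zero] with n hn
  exact mul_div_cancel_right₀ _ hn

lemma prod_Ico_neg_eq_prod_range_mul {M : Type*} [CommMonoid M] (f : ℤ → M) (n : ℕ) :
    ∏ k ∈ Ico (-(n : ℤ)) n, f k = ∏ j ∈ range n, f j * f (-1 - j) := by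
  induction n with
  | zero => simp
  | succ n ih =>
    have hIco : Ico (-(n + 1 : ℤ)) (n + 1) =
        insert (-1 - (n : ℤ)) (insert (n : ℤ) (Ico (-(n : ℤ)) n)) := by
      ext k
      simp only [mem_Ico, mem_insert]
      omega
    push_cast
    rw [hIco, prod_insert (by simp), prod_insert (by simp), ih, prod_range_succ]
    ac_rfl

lemma tendsto_Ico_neg_atTop : Tendsto (fun n : ℕ => Ico (-(n : ℤ)) n) atTop atTop :=
  tendsto_atTop_finset_of_monotone (fun _ _ h => Ico_subset_Ico (by omega) (by omega))
    fun k => ⟨k.natAbs + 1, by simp only [mem_Ico]; omega⟩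

lemma div_sub_mul_div_add_eq {K : Type*} [Field K] (a b : K) {m : K} (hm : m ≠ 0) :
    (a - m) / (b - m) * ((a + m) / (b + m)) = (1 - a ^ 2 / m ^ 2) / (1 - b ^ 2 / m ^ 2) := by
  rw [div_mul_div_comm, one_sub_div (pow_ne_zero 2 hm), one_sub_div (pow_ne_zero 2 hm),
    div_div_div_cancel_right₀ (pow_ne_zero 2 hm), ← neg_div_neg_eq]
  ring_nf

lemma Complex.cos_pi_mul_div_two_ne_zero {b : ℂ} (hb : ∀ k : ℤ, b ≠ 2 * k + 1) :
    cos (π * b / 2) ≠ 0 := by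
  rw [Ne, cos_eq_zero_iff]
  rintro ⟨k, hk⟩
  refine hb k (mul_left_cancel₀ (ofReal_ne_zero.2 Real.pi_ne_zero) ?_)
  linear_combination 2 * hk

theorem tendsto_prod_Ico_div_sub_odd (a : ℂ) {b : ℂ} (hb : ∀ k : ℤ, b ≠ 2 * k + 1) :
    Tendsto (fun n : ℕ => ∏ k ∈ Ico (-(n : ℤ)) n, (a - (2 * k + 1)) / (b - (2 * k + 1))) atTop
      (𝓝 (cos (π * a / 2) / cos (π * b / 2))) := by
  refine ((Complex.tendsto_prod_one_sub_sq_div_odd_sq a).div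
    (Complex.tendsto_prod_one_sub_sq_div_odd_sq b) (cos_pi_mul_div_two_ne_zero hb)).congr
    fun n => ?_
  rw [Pi.div_apply, prod_Ico_neg_eq_prod_range_mul, ← prod_div_distrib]
  refine prod_congr rfl fun j _ => ?_
  rw [← div_sub_mul_div_add_eq a b (m := 2 * (j : ℂ) + 1) (by norm_cast)]
  push_cast
  ring_nf

lemma summable_one_div_norm_sub_odd_sq (w : ℂ) :
    Summable fun k : ℤ => 1 / ‖w - (2 * k + 1)‖ ^ 2 := by
  refine (Real.summable_one_div_int_pow.2 one_lt_two).of_norm_bounded_eventually ?_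
  have hfar : ∀ᶠ k : ℤ in cofinite, |w.re| + 1 ≤ |(k : ℝ)| := by
    have := (tendsto_norm_cocompact_atTop.comp Int.tendsto_coe_cofinite).eventually_ge_atTop
      (|w.re| + 1)
    simpa using this
  filter_upwards [hfar] with k hk
  have hk0 : 0 < |(k : ℝ)| := by linarith [abs_nonneg w.re]
  have hnorm : |(k : ℝ)| ≤ ‖w - (2 * k + 1)‖ := by
    have hre : (w - (2 * k + 1)).re = w.re - (2 * k + 1) := by simp
    refine le_trans ?_ (abs_re_le_norm _)
    rw [hre]
    cases abs_cases (k : ℝ) <;> cases abs_cases w.re <;>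
      cases abs_cases (w.re - (2 * k + 1)) <;> linarith
  rw [Real.norm_eq_abs, abs_of_nonneg (by positivity), ← sq_abs (k : ℝ)]
  gcongr

lemma abs_norm_div_sub_one_le {K : Type*} [NormedField K] (x : K) {y : K} (hy : y ≠ 0) :
    |‖x / y‖ - 1| ≤ |‖y‖ ^ 2 - ‖x‖ ^ 2| / ‖y‖ ^ 2 := by
  have hy' : 0 < ‖y‖ ^ 2 := pow_pos (norm_pos_iff.2 hy) 2
  calc |‖x / y‖ - 1| ≤ |‖x / y‖ - 1| * (‖x / y‖ + 1) :=
        le_mul_of_one_le_right (abs_nonneg _) (by linarith [norm_nonneg (x / y)])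
    _ = |(‖y‖ ^ 2 - ‖x‖ ^ 2) / ‖y‖ ^ 2| := by
      rw [← abs_of_nonneg (by positivity : 0 ≤ ‖x / y‖ + 1), ← abs_mul, ← abs_neg, norm_div]
      congr 1
      field_simp
      ring
    _ = |‖y‖ ^ 2 - ‖x‖ ^ 2| / ‖y‖ ^ 2 := by rw [abs_div, abs_of_pos hy']

theorem multipliable_norm_div_sub_odd {a b : ℂ} (hre : a.re = b.re) (hb : b.im ≠ 0) :
    Multipliable fun k : ℤ => ‖(a - (2 * k + 1)) / (b - (2 * k + 1))‖ := by
  have hdiff : ∀ k : ℤ, ‖b - (2 * k + 1)‖ ^ 2 - ‖a - (2 * k + 1)‖ ^ 2 = b.im ^ 2 - a.im ^ 2 := by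
    intro k
    simp only [Complex.sq_norm, normSq_apply, sub_re, sub_im, add_re, add_im, mul_re, mul_im,
      re_ofNat, im_ofNat, intCast_re, intCast_im, one_re, one_im, hre]
    ring
  have hne : ∀ k : ℤ, b - (2 * k + 1) ≠ 0 := fun k h => hb (by simpa using congrArg Complex.im h)
  have hsum : Summable fun k : ℤ => ‖(a - (2 * k + 1)) / (b - (2 * k + 1))‖ - 1 :=
    ((summable_one_div_norm_sub_odd_sq b).mul_left |b.im ^ 2 - a.im ^ 2|).of_norm_bounded
      fun k => by
        simpa only [mul_one_div, ← hdiff k, Real.norm_eq_abs] using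
          abs_norm_div_sub_one_le _ (hne k)
  simpa using Real.multipliable_one_add_of_summable hsum

theorem hasProd_norm_div_sub_odd {a b : ℂ} (hre : a.re = b.re) (hb : b.im ≠ 0) :
    HasProd (fun k : ℤ => ‖(a - (2 * k + 1)) / (b - (2 * k + 1))‖)
      ‖cos (π * a / 2) / cos (π * b / 2)‖ := by
  have hmul := multipliable_norm_div_sub_odd hre hb
  have hodd : ∀ k : ℤ, b ≠ 2 * k + 1 := fun k h => hb (by simp [h])
  have hlim := ((continuous_norm.tendsto _).comp (tendsto_prod_Ico_div_sub_odd a hodd))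
  simp only [Function.comp_def, norm_prod] at hlim
  rw [← tendsto_nhds_unique (hmul.hasProd.comp tendsto_Ico_neg_atTop) hlim]
  exact hmul.hasProd

lemma sub_zk_div_sub_conj_zk (α : ℝ) {γ : ℝ} (hγ : γ ≠ 0) (z : ℂ) (k : ℤ) :
    (z - zk α γ k) / (z - (starRingEnd ℂ) (zk α γ k)) =
      (γ * z - α * I - (2 * k + 1)) / (γ * z + α * I - (2 * k + 1)) := by
  have hγ' : (γ : ℂ) ≠ 0 := ofReal_ne_zero.2 hγ
  have hnum : z - zk α γ k = (γ * z - α * I - (2 * k + 1)) / γ := by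
    rw [zk]; field_simp; ring
  have hden : z - (starRingEnd ℂ) (zk α γ k) = (γ * z + α * I - (2 * k + 1)) / γ := by
    simp only [zk, map_div₀, map_add, map_mul, map_ofNat, map_one, map_intCast,
      conj_ofReal, conj_I]
    field_simp; ring
  rw [hnum, hden, div_div_div_cancel_right₀ hγ']

lemma Complex.cos_eq_exp_div_two_mul {c p q u : ℂ} (hp : c + p = u * I) (hq : c + q = -u * I) :
    cos u = exp c / 2 * (exp p + exp q) := by
  rw [cos, ← hp, ← hq, exp_add, exp_add]
  ring

lemma Bag_eq_cos_div_cos (α γ : ℝ) (z : ℂ) :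
    Bag α γ z = cos (π * (γ * z - α * I) / 2) / cos (π * (γ * z + α * I) / 2) := by
  -- Both cosines are the same nonzero multiple of the numerator resp. denominator of `Bag`,
  -- so the identity holds also where both sides are `x / 0 = 0`.
  have hnum := cos_eq_exp_div_two_mul (u := π * (γ * z - α * I) / 2)
    (c := -(I * π * γ * z / 2) + π * α / 2)
    (p := I * π * γ * z) (q := -(π * α : ℝ))
    (by linear_combination ((π : ℂ) * α / 2) * I_sq)
    (by push_cast; linear_combination (-(π : ℂ) * α / 2) * I_sq)
  have hden := cos_eq_exp_div_two_mul (u := π * (γ * z + α * I) / 2)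
    (c := -(I * π * γ * z / 2) + π * α / 2)
    (p := I * π * γ * z - (π * α : ℝ)) (q := 0)
    (by push_cast; linear_combination (-(π : ℂ) * α / 2) * I_sq)
    (by linear_combination ((π : ℂ) * α / 2) * I_sq)
  rw [exp_zero, add_comm (exp _)] at hden
  rw [Bag, hnum, hden, mul_div_mul_left _ _ (div_ne_zero (exp_ne_zero _) two_ne_zero)]

/-- for every `z` in the upper half-plane, the family of pseudohyperbolic
moduli `|(z−z_k)/(z−conj z_k)|`, `k ∈ ℤ`, is multipliable, and its product equals
`|B_{α,γ}(z)|`. -/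
theorem blaschke_product_of_arithmetic_zeros
    (α γ : ℝ) (hα : 0 < α) (hγ : 0 < γ) (z : ℂ) (hz : 0 < z.im) :
    Multipliable (fun k : ℤ =>
      ‖(z - zk α γ k) / (z - (starRingEnd ℂ) (zk α γ k))‖) ∧
    (∏' k : ℤ, ‖(z - zk α γ k) / (z - (starRingEnd ℂ) (zk α γ k))‖) =
      ‖Bag α γ z‖ := by
  have hprod : HasProd (fun k : ℤ => ‖(z - zk α γ k) / (z - (starRingEnd ℂ) (zk α γ k))‖)
      ‖Bag α γ z‖ := by
    simp only [sub_zk_div_sub_conj_zk α hγ.ne' z, Bag_eq_cos_div_cos]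
    refine hasProd_norm_div_sub_odd (by simp) ?_
    simp only [add_im, mul_im, ofReal_re, ofReal_im, I_re, I_im, zero_mul, mul_one, add_zero]
    positivity
  exact ⟨hprod.multipliable, hprod.tprod_eq⟩
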